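/- On an isoradial graph with critical weights, a function f : edges → ℂ is s-holomorphic at an interior vertex z if and only if T(Sf)(e) = 0 for all directed edges e pointing at z, where S is the local projection operator (Sf)(e) = sin(θ_e/2)·Proj(f(e); ℓ_e) and T is the Kac-Ward operator with critical weights x_e = tan(θ_e/2). -/

import Mathlib

/-!
At consecutive incoming edges `e₁, e₂` of `z`, the two Kac-Ward equations with critical weights
combine into `exp (-iθ₁) ν e₁ - ν e₂ = Proj (f e₁) - Proj (f e₂)`, the projections being on the
line of the face between `e₁` and `e₂`, where `ν e = exp (iθ_e/2) T(Sf)(e) / x_e`. Transitions to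
edges other than the reversals of `e₁, e₂` cancel because turning angles add; the two remaining
terms recombine the projections on `ℓ_e` and on the perpendicular line `ℓ_{-e}` into the projection
on the face line. So `T(Sf) = 0` at `z` gives s-holomorphicity, and conversely s-holomorphicity
makes `ν` a cocycle `ν e₂ = exp (-iθ₁) ν e₁`: going once around `z` multiplies `ν` by `exp (-iW)`
with `0 < W ≤ π`, so `ν` vanishes.
-/

open Complex

noncomputable section

attribute [local instance] Classical.propDecidable

/-- Reversal of a directed edge. -/
def rev (e : ℂ × ℂ) : ℂ × ℂ := (e.2, e.1)

/-- The undirected edge underlying a directed edge. -/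
def ue (e : ℂ × ℂ) : Sym2 ℂ := s(e.1, e.2)

/-- The turning angle `∠(e, g) ∈ (-π, π]`. -/
def ang (e g : ℂ × ℂ) : ℝ := Complex.arg ((g.2 - g.1) / (e.2 - e.1))

/-- The counterclockwise angle from `e` to `g`, in `(0, 2π]`. -/
def ccw (e g : ℂ × ℂ) : ℝ := if 0 < ang e g then ang e g else ang e g + 2 * Real.pi

/-- `e₁` and `e₂` are consecutive (in counterclockwise order) directed edges of `D`
pointing at the vertex `z`: no other edge of `D` pointing at `z` lies strictly between
them counterclockwise. -/
def ConsecIn (D : Set (ℂ × ℂ)) (z : ℂ) (e₁ e₂ : ℂ × ℂ) : Prop :=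
  e₁ ∈ D ∧ e₂ ∈ D ∧ e₁.2 = z ∧ e₂.2 = z ∧ e₁ ≠ e₂ ∧
  ∀ g ∈ D, g.2 = z → g ≠ e₁ → g ≠ e₂ → ccw (rev e₁) (rev e₂) ≤ ccw (rev e₁) (rev g)

/-- An isoradial graph, presented by its symmetric set of directed edges together with
the rhombus half-angles `θ_e ∈ (0, π)` of its edges.  The fields `angleSum`,
`consecAngle` and `angAdd` record the basic geometric properties of a rhombic (isoradial)
embedding: the angles `θ` sum to `π` around every vertex, the turning angle between
consecutive incoming edges at a vertex is `θ_{e₁} + θ_{e₂}`, and turning angles at a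
vertex are additive. -/
structure Isoradial where
  D : Set (ℂ × ℂ)
  θ : Sym2 ℂ → ℝ
  nd : ∀ e ∈ D, e.1 ≠ e.2
  symm : ∀ e ∈ D, rev e ∈ D
  finOut : ∀ z : ℂ, {g ∈ D | g.1 = z}.Finite
  θpos : ∀ e ∈ D, 0 < θ (ue e)
  θlt : ∀ e ∈ D, θ (ue e) < Real.pi
  angleSum : ∀ z : ℂ, {g ∈ D | g.1 = z}.Nonempty →
    ∑ g ∈ (finOut z).toFinset, θ (ue g) = Real.pi
  consecAngle : ∀ z e₁ e₂, ConsecIn D z e₁ e₂ → ang e₁ e₂ = θ (ue e₁) + θ (ue e₂)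
  angAdd : ∀ z e₁ e₂ g, ConsecIn D z e₁ e₂ → g ∈ D → g.1 = z →
    g ≠ rev e₁ → g ≠ rev e₂ → ang e₁ e₂ + ang e₂ g = ang e₁ g

/-- The Kac-Ward operator `T = Id - Λ` acting on functions of directed edges (the
transition sum is taken at directed edges of the graph, and `T` acts as the identity on
the orthogonal complement, i.e. away from the graph). -/
def KWop (Γ : Isoradial) (x : Sym2 ℂ → ℝ) (φ : (ℂ × ℂ) → ℂ) (e : ℂ × ℂ) : ℂ :=
  φ e - if e ∈ Γ.D then
    ∑ g ∈ (Γ.finOut e.2).toFinset,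
      if g ≠ rev e then (x (ue e) : ℂ) * Complex.exp (Complex.I * (ang e g : ℂ) / 2) * φ g
      else 0
  else 0

/-- The critical weight system `x_e = tan(θ_e/2)`. -/
def critX (Γ : Isoradial) : Sym2 ℂ → ℝ := fun t => Real.tan (Γ.θ t / 2)

/-- The unit complex number `exp(-i ∠(e)/2)` spanning the line `ℓ_e`. -/
def dirL (e : ℂ × ℂ) : ℂ := Complex.exp (-Complex.I * (Complex.arg (e.2 - e.1) : ℂ) / 2)

/-- The line `ℓ_e = exp(-i ∠(e)/2) ℝ ⊆ ℂ`. -/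
def lineOf (e : ℂ × ℂ) : Set ℂ := {c : ℂ | ∃ r : ℝ, c = dirL e * (r : ℂ)}

/-- Orthogonal projection of `w` onto the line `u·ℝ`. -/
def projL (u w : ℂ) : ℂ := (((w * (starRingEnd ℂ u)).re / Complex.normSq u : ℝ) : ℂ) * u

/-- The operator `S`: `(Sf)(e) = sin(θ_e/2)·Proj(f(e); ℓ_e)`,
mapping functions of undirected edges to elements of `L = ∏_e ℓ_e`. -/
def Sproj (Γ : Isoradial) (f : Sym2 ℂ → ℂ) (e : ℂ × ℂ) : ℂ :=
  ((Real.sin (Γ.θ (ue e) / 2) : ℝ) : ℂ) * projL (dirL e) (f (ue e))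

/-- A unit vector spanning the line `(z - z*)^{-1/2} ℝ = exp(-iθ_{e₁}/2) ℓ_{e₁}` of the
face shared by a pair of consecutive incoming edges `e₁, e₂` at `z` (here `z*` is the
circumcenter of that face). -/
def faceDir (Γ : Isoradial) (e₁ : ℂ × ℂ) : ℂ :=
  Complex.exp (-Complex.I * (Γ.θ (ue e₁) : ℂ) / 2) * dirL e₁

/-- `f` is s-holomorphic at `z`: for every face incident to `z` (equivalently, every pair
of consecutive incoming edges `e₁, e₂` at `z`), the projections of `f(e₁)` and `f(e₂)`
onto the line `(z - z*)^{-1/2} ℝ` of the face coincide. -/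
def SHolAt (Γ : Isoradial) (f : Sym2 ℂ → ℂ) (z : ℂ) : Prop :=
  ∀ e₁ e₂ : ℂ × ℂ, ConsecIn Γ.D z e₁ e₂ →
    projL (faceDir Γ e₁) (f (ue e₁)) = projL (faceDir Γ e₁) (f (ue e₂))

open ComplexConjugate Finset
open scoped Real

lemma rev_injective : Function.Injective rev := fun _ _ h =>
  Prod.ext (congrArg Prod.snd h) (congrArg Prod.fst h)

lemma ue_rev (e : ℂ × ℂ) : ue (rev e) = ue e := Sym2.eq_swap

lemma projL_of_normSq_eq_one {u : ℂ} (hu : normSq u = 1) (w : ℂ) :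
    projL u w = (w + u ^ 2 * conj w) / 2 := by
  have hre : ((w * conj u).re : ℂ) = (w * conj u + conj w * u) / 2 := by
    rw [re_eq_add_conj, map_mul, conj_conj]
  have hu' : conj u * u = 1 := by rw [mul_comm, mul_conj, hu, ofReal_one]
  rw [projL, hu, div_one, hre]
  linear_combination w * hu' / 2

lemma normSq_exp_neg_I_mul_div_two (t : ℝ) : normSq (exp (-I * t / 2)) = 1 := by
  rw [normSq_eq_norm_sq, norm_exp]
  simp

lemma normSq_dirL (e : ℂ × ℂ) : normSq (dirL e) = 1 :=
  normSq_exp_neg_I_mul_div_two _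

lemma normSq_faceDir (Γ : Isoradial) (e : ℂ × ℂ) : normSq (faceDir Γ e) = 1 := by
  rw [faceDir, map_mul, normSq_dirL, normSq_exp_neg_I_mul_div_two, mul_one]

lemma exp_neg_I_mul_arg {x : ℂ} (hx : x ≠ 0) : exp (-I * arg x) = conj x / ‖x‖ := by
  have hnorm : (‖x‖ : ℂ) ≠ 0 := ofReal_ne_zero.mpr (norm_ne_zero_iff.mpr hx)
  have h := congrArg conj (norm_mul_exp_arg_mul_I x)
  rw [map_mul, conj_ofReal, ← exp_conj, map_mul, conj_ofReal, conj_I] at h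
  rw [eq_div_iff hnorm, ← h]
  ring_nf

lemma dirL_sq (e : ℂ × ℂ) : dirL e ^ 2 = exp (-I * arg (e.2 - e.1)) := by
  rw [dirL, ← exp_nat_mul]
  ring_nf

lemma dirL_rev_sq {e : ℂ × ℂ} (he : e.1 ≠ e.2) : dirL (rev e) ^ 2 = -dirL e ^ 2 := by
  have hv : e.2 - e.1 ≠ 0 := sub_ne_zero.mpr he.symm
  have hrev : (rev e).2 - (rev e).1 = -(e.2 - e.1) := by simp [rev]
  rw [dirL_sq, dirL_sq, hrev, exp_neg_I_mul_arg (neg_ne_zero.mpr hv), exp_neg_I_mul_arg hv,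
    map_neg, norm_neg, neg_div]

lemma dirL_sq_eq_exp_ang_mul {e g : ℂ × ℂ} (he : e.1 ≠ e.2) (hg : g.1 ≠ g.2) :
    dirL g ^ 2 = exp (-I * ang e g) * dirL e ^ 2 := by
  have hve : e.2 - e.1 ≠ 0 := sub_ne_zero.mpr he.symm
  have hvg : g.2 - g.1 ≠ 0 := sub_ne_zero.mpr hg.symm
  have hne : (‖e.2 - e.1‖ : ℂ) ≠ 0 := ofReal_ne_zero.mpr (norm_ne_zero_iff.mpr hve)
  have hng : (‖g.2 - g.1‖ : ℂ) ≠ 0 := ofReal_ne_zero.mpr (norm_ne_zero_iff.mpr hvg)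
  have hce : conj (e.2 - e.1) ≠ 0 := (map_ne_zero _).mpr hve
  rw [dirL_sq, dirL_sq, ang, exp_neg_I_mul_arg hve, exp_neg_I_mul_arg hvg,
    exp_neg_I_mul_arg (div_ne_zero hvg hve), map_div₀, norm_div, ofReal_div]
  field_simp

lemma faceDir_sq (Γ : Isoradial) (e : ℂ × ℂ) :
    faceDir Γ e ^ 2 = exp (-I * Γ.θ (ue e)) * dirL e ^ 2 := by
  rw [faceDir, mul_pow, ← exp_nat_mul]
  ring_nf

/-- Rotating the line `u ℝ` by the half-angle `t/2` mixes the projections on `u ℝ` and on the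
perpendicular line `v ℝ` with weights `cos (t/2)` and `sin (t/2)`. -/
lemma cos_mul_projL_add_I_sin_mul_projL (t : ℝ) {u v p : ℂ} (hu : normSq u = 1)
    (hv : normSq v = 1) (hp : normSq p = 1) (hvu : v ^ 2 = -u ^ 2)
    (hpu : p ^ 2 = exp (-I * t) * u ^ 2) (w : ℂ) :
    Real.cos (t / 2) * projL u w + I * Real.sin (t / 2) * projL v w =
      exp (I * t / 2) * projL p w := by
  have hE : exp (I * t / 2) = Real.cos (t / 2) + Real.sin (t / 2) * I := by
    rw [show I * t / 2 = ((t / 2 : ℝ) : ℂ) * I by push_cast; ring, exp_mul_I, ← ofReal_cos,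
      ← ofReal_sin]
  have hF : exp (-I * t / 2) = Real.cos (t / 2) - Real.sin (t / 2) * I := by
    rw [show -I * t / 2 = ((-(t / 2) : ℝ) : ℂ) * I by push_cast; ring, exp_mul_I, ← ofReal_cos,
      ← ofReal_sin, Real.cos_neg, Real.sin_neg, ofReal_neg]
    ring
  have hEF : exp (I * t / 2) * exp (-I * t / 2) = 1 := by
    rw [← exp_add]; ring_nf; exact exp_zero
  have hFF : exp (-I * t) = exp (-I * t / 2) * exp (-I * t / 2) := by
    rw [← exp_add]; ring_nf
  rw [projL_of_normSq_eq_one hu, projL_of_normSq_eq_one hv, projL_of_normSq_eq_one hp, hvu, hpu,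
    hFF]
  linear_combination (-w / 2) * hE - (u ^ 2 * conj w / 2) * hF
    - (exp (-I * t / 2) * u ^ 2 * conj w / 2) * hEF

lemma arg_neg_of_arg_pos {x : ℂ} (h : 0 < arg x) : arg (-x) = arg x - π := by
  refine arg_neg_eq_arg_sub_pi_iff.mpr ?_
  have him : 0 ≤ x.im := arg_nonneg_iff.mp h.le
  rcases him.lt_or_eq with him | him
  · exact Or.inl him
  · refine Or.inr ⟨him.symm, not_le.mp fun hre => h.ne' ?_⟩
    exact arg_eq_zero_iff.mpr ⟨hre, him.symm⟩

lemma arg_neg_inv_of_arg_pos {x : ℂ} (h : 0 < arg x) : arg (-x⁻¹) = π - arg x := by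
  have hx : x ≠ 0 := fun hx => by simp [hx] at h
  have hneg : arg (-x) ≠ π := by
    rw [arg_neg_of_arg_pos h]; linarith [arg_le_pi x]
  have hpos : 0 < (normSq x)⁻¹ := inv_pos.mpr (normSq_pos.mpr hx)
  rw [inv_def, ← neg_mul, ← map_neg, arg_mul_real hpos, arg_conj, if_neg hneg,
    arg_neg_of_arg_pos h]
  ring

lemma ang_rev_right {a b : ℂ × ℂ} (h : 0 < ang a b) : ang a (rev b) = ang a b - π := by
  rw [ang, show (rev b).2 - (rev b).1 = -(b.2 - b.1) by simp [rev], neg_div]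
  exact arg_neg_of_arg_pos h

lemma ang_rev_left {a b : ℂ × ℂ} (h : 0 < ang a b) : ang b (rev a) = π - ang a b := by
  rw [ang, show ((rev a).2 - (rev a).1) / (b.2 - b.1) = -((b.2 - b.1) / (a.2 - a.1))⁻¹ by
    simp only [rev, inv_div]; ring]
  exact arg_neg_inv_of_arg_pos h

lemma sum_ite_ne_sub_sum_ite_ne {α M : Type*} [DecidableEq α] [AddCommGroup M] {s : Finset α}
    {a b : α} (ha : a ∈ s) (hb : b ∈ s) (hab : a ≠ b) {f g : α → M}
    (hfg : ∀ c ∈ s, c ≠ a → c ≠ b → f c = g c) :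
    ∑ c ∈ s, (if c ≠ a then f c else 0) - ∑ c ∈ s, (if c ≠ b then g c else 0) = f b - g a := by
  rw [← sum_filter, ← sum_filter, filter_ne', filter_ne',
    ← add_sum_erase _ _ (mem_erase.mpr ⟨hab.symm, hb⟩),
    ← add_sum_erase _ _ (mem_erase.mpr ⟨hab, ha⟩), erase_right_comm,
    sum_congr rfl fun c hc => hfg c (mem_of_mem_erase (mem_of_mem_erase hc))
      (ne_of_mem_erase hc) (ne_of_mem_erase (mem_of_mem_erase hc))]
  abel

section Cycle

lemma exp_neg_I_mul_ne_one {t : ℝ} (h₀ : 0 < t) (h₁ : t < 2 * π) : exp (-I * t) ≠ 1 := by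
  intro h
  have hcos : Real.cos t = 1 := by
    have := congrArg re h
    rwa [show -I * t = ((-t : ℝ) : ℂ) * I by push_cast; ring, exp_ofReal_mul_I_re,
      Real.cos_neg, one_re] at this
  have := (Real.cos_eq_one_iff_of_lt_of_lt (by linarith) h₁).mp hcos
  linarith

variable {α : Type*} {S : Finset α} {σ : α → α} {θ : α → ℝ} {ν : α → ℂ}

lemma iterate_eq_exp_mul (hσ : Set.MapsTo σ S S) (hν : ∀ x ∈ S, ν (σ x) = exp (-I * θ x) * ν x)
    {x : α} (hx : x ∈ S) (n : ℕ) :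
    ν (σ^[n] x) = exp (-I * ∑ k ∈ range n, θ (σ^[k] x)) * ν x := by
  induction n with
  | zero => simp
  | succ n ih =>
    rw [Function.iterate_succ_apply', hν _ (hσ.iterate n hx), ih, ← mul_assoc, ← exp_add,
      sum_range_succ]
    push_cast
    ring_nf

/-- Along a cycle of `σ` the total phase is `exp (-i W)` with `0 < W < 2π`. -/
lemma eq_zero_of_map_eq_exp_mul (hσ : Set.MapsTo σ S S) (hθ : ∀ x ∈ S, 0 < θ x)
    (hsum : ∑ x ∈ S, θ x < 2 * π) (hν : ∀ x ∈ S, ν (σ x) = exp (-I * θ x) * ν x)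
    {x : α} (hx : x ∈ S) : ν x = 0 := by
  obtain ⟨a, b, hab, heq⟩ := S.finite_toSet.exists_lt_map_eq_of_forall_mem
    (f := fun n => σ^[n] x) fun n => hσ.iterate n hx
  set y := σ^[a] x
  have hy : y ∈ S := hσ.iterate a hx
  have hper : Function.IsPeriodicPt σ (b - a) y := by
    change σ^[b - a] (σ^[a] x) = σ^[a] x
    rw [← Function.iterate_add_apply, Nat.sub_add_cancel hab.le]
    exact heq.symm
  set p := Function.minimalPeriod σ y
  have hp : 0 < p := hper.minimalPeriod_pos (Nat.sub_pos_of_lt hab)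
  set W := ∑ k ∈ range p, θ (σ^[k] y)
  have hW₀ : 0 < W := sum_pos (fun k _ => hθ _ (hσ.iterate k hy)) ⟨0, mem_range.mpr hp⟩
  have hinj : Set.InjOn (σ^[·] y) (range p) := fun i hi j hj hij =>
    Function.iterate_injOn_Iio_minimalPeriod (mem_range.mp hi) (mem_range.mp hj) hij
  have hW₁ : W < 2 * π :=
    calc W = ∑ g ∈ (range p).image (σ^[·] y), θ g := (sum_image hinj).symm
      _ ≤ ∑ g ∈ S, θ g := sum_le_sum_of_subset_of_nonneg
          (image_subset_iff.mpr fun k _ => hσ.iterate k hy) fun g hg _ => (hθ g hg).le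
      _ < 2 * π := hsum
  have hνy : ν y = 0 := by
    have hcycle := iterate_eq_exp_mul hσ hν hy p
    rw [Function.isPeriodicPt_minimalPeriod σ y] at hcycle
    have : (1 - exp (-I * W)) * ν y = 0 := by linear_combination hcycle
    exact (mul_eq_zero.mp this).resolve_left (sub_ne_zero.mpr (exp_neg_I_mul_ne_one hW₀ hW₁).symm)
  have hstart := iterate_eq_exp_mul hσ hν hx a
  rw [hνy] at hstart
  exact (mul_eq_zero.mp hstart.symm).resolve_left (exp_ne_zero _)

end Cycle

namespace Isoradial

variable (Γ : Isoradial)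

lemma sin_half_θ_pos {e : ℂ × ℂ} (he : e ∈ Γ.D) : 0 < Real.sin (Γ.θ (ue e) / 2) :=
  Real.sin_pos_of_pos_of_lt_pi (by linarith [Γ.θpos e he]) (by linarith [Γ.θlt e he, Real.pi_pos])

lemma critX_pos {e : ℂ × ℂ} (he : e ∈ Γ.D) : 0 < critX Γ (ue e) :=
  Real.tan_pos_of_pos_of_lt_pi_div_two (by linarith [Γ.θpos e he]) (by linarith [Γ.θlt e he])

variable {Γ} {z : ℂ} {e₁ e₂ : ℂ × ℂ}

lemma ang_consec_rev_right (h : ConsecIn Γ.D z e₁ e₂) :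
    ang e₁ (rev e₂) = Γ.θ (ue e₁) + Γ.θ (ue e₂) - π := by
  have hang := Γ.consecAngle z e₁ e₂ h
  rw [ang_rev_right (by rw [hang]; linarith [Γ.θpos e₁ h.1, Γ.θpos e₂ h.2.1]), hang]

lemma ang_consec_rev_left (h : ConsecIn Γ.D z e₁ e₂) :
    ang e₂ (rev e₁) = π - (Γ.θ (ue e₁) + Γ.θ (ue e₂)) := by
  have hang := Γ.consecAngle z e₁ e₂ h
  rw [ang_rev_left (by rw [hang]; linarith [Γ.θpos e₁ h.1, Γ.θpos e₂ h.2.1]), hang]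

variable {e : ℂ × ℂ}

variable (Γ z) in
def inEdges : Finset (ℂ × ℂ) := (Γ.finOut z).toFinset.image rev

lemma mem_inEdges : e ∈ Γ.inEdges z ↔ e ∈ Γ.D ∧ e.2 = z := by
  simp only [inEdges, mem_image, Set.Finite.mem_toFinset, Set.mem_ofPred_eq]
  constructor
  · rintro ⟨g, ⟨hg, hgz⟩, rfl⟩
    exact ⟨Γ.symm g hg, hgz⟩
  · rintro ⟨he, hez⟩
    exact ⟨rev e, ⟨Γ.symm e he, hez⟩, rfl⟩

lemma sum_inEdges_θ (he : e ∈ Γ.inEdges z) : ∑ g ∈ Γ.inEdges z, Γ.θ (ue g) = π := by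
  obtain ⟨heD, hez⟩ := mem_inEdges.mp he
  rw [inEdges, sum_image rev_injective.injOn]
  simp only [ue_rev]
  exact Γ.angleSum z ⟨rev e, Γ.symm e heD, hez⟩

lemma exists_mem_inEdges_ne (he : e ∈ Γ.inEdges z) : ∃ g ∈ Γ.inEdges z, g ≠ e := by
  by_contra! h
  have hsum := sum_inEdges_θ he
  rw [eq_singleton_iff_unique_mem.mpr ⟨he, h⟩, sum_singleton] at hsum
  exact (Γ.θlt e (mem_inEdges.mp he).1).ne hsum

lemma exists_consecIn (he : e ∈ Γ.inEdges z) : ∃ e', ConsecIn Γ.D z e e' := by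
  obtain ⟨g, hg, hge⟩ := exists_mem_inEdges_ne he
  obtain ⟨e', he', hmin⟩ := ((Γ.inEdges z).erase e).exists_min_image
    (fun g => ccw (rev e) (rev g)) ⟨g, mem_erase.mpr ⟨hge, hg⟩⟩
  obtain ⟨hne, he'⟩ := mem_erase.mp he'
  rw [mem_inEdges] at he he'
  exact ⟨e', he.1, he'.1, he.2, he'.2, hne.symm, fun g hg hgz hge _ =>
    hmin g (mem_erase.mpr ⟨hge, mem_inEdges.mpr ⟨hg, hgz⟩⟩)⟩

end Isoradial

lemma KWop_div_weight (Γ : Isoradial) (x : Sym2 ℂ → ℝ) (φ : ℂ × ℂ → ℂ) {e : ℂ × ℂ}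
    (he : e ∈ Γ.D) (hx : x (ue e) ≠ 0) :
    KWop Γ x φ e / x (ue e) = φ e / x (ue e) -
      ∑ g ∈ (Γ.finOut e.2).toFinset, if g ≠ rev e then exp (I * ang e g / 2) * φ g else 0 := by
  have hx' : (x (ue e) : ℂ) ≠ 0 := ofReal_ne_zero.mpr hx
  rw [KWop, if_pos he, sub_div, sum_div]
  congr 1
  refine sum_congr rfl fun g _ => ?_
  split_ifs
  · field_simp
  · exact zero_div _

/-- The Kac-Ward equations at two consecutive incoming edges differ only through the two edges
leaving `z` backwards along them: every other transition phase from `e₁` is that from `e₂` turned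
by `θ₁ + θ₂`. -/
lemma KWop_consec (Γ : Isoradial) (x : Sym2 ℂ → ℝ) (φ : ℂ × ℂ → ℂ) {z : ℂ} {e₁ e₂ : ℂ × ℂ}
    (h : ConsecIn Γ.D z e₁ e₂) (hx₁ : x (ue e₁) ≠ 0) (hx₂ : x (ue e₂) ≠ 0) :
    exp (-I * Γ.θ (ue e₁) / 2) * (KWop Γ x φ e₁ / x (ue e₁)) -
        exp (I * Γ.θ (ue e₂) / 2) * (KWop Γ x φ e₂ / x (ue e₂)) =
      exp (-I * Γ.θ (ue e₁) / 2) * (φ e₁ / x (ue e₁) + I * φ (rev e₁)) -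
        exp (I * Γ.θ (ue e₂) / 2) * (φ e₂ / x (ue e₂) - I * φ (rev e₂)) := by
  have ⟨h₁, h₂, hz₁, hz₂, hne, _⟩ := h
  set t₁ := Γ.θ (ue e₁)
  set t₂ := Γ.θ (ue e₂)
  set s := (Γ.finOut z).toFinset
  have hmem : ∀ {e}, e ∈ Γ.D → e.2 = z → rev e ∈ s := fun he hez =>
    (Γ.finOut z).mem_toFinset.mpr ⟨Γ.symm _ he, hez⟩
  have hsum := sum_ite_ne_sub_sum_ite_ne (hmem h₁ hz₁) (hmem h₂ hz₂)
    (rev_injective.ne hne) (f := fun g => exp (-I * t₁ / 2) * (exp (I * ang e₁ g / 2) * φ g))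
    (g := fun g => exp (I * t₂ / 2) * (exp (I * ang e₂ g / 2) * φ g)) fun g hg hg₁ hg₂ => by
      have hg' := (Γ.finOut z).mem_toFinset.mp hg
      rw [← mul_assoc, ← mul_assoc, ← exp_add, ← exp_add,
        ← Γ.angAdd z e₁ e₂ g h hg'.1 hg'.2 hg₁ hg₂, Γ.consecAngle z e₁ e₂ h]
      congr 2
      push_cast
      ring
  have hphase₁ : exp (-I * t₁ / 2) * exp (I * ang e₁ (rev e₂) / 2) = -I * exp (I * t₂ / 2) := by
    rw [Isoradial.ang_consec_rev_right h, ← exp_add,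
      show -I * t₁ / 2 + I * ((t₁ + t₂ - π : ℝ) : ℂ) / 2 = -π / 2 * I + I * t₂ / 2 by
        push_cast; ring, exp_add, exp_neg_pi_div_two_mul_I]
  have hphase₂ : exp (I * t₂ / 2) * exp (I * ang e₂ (rev e₁) / 2) = I * exp (-I * t₁ / 2) := by
    rw [Isoradial.ang_consec_rev_left h, ← exp_add,
      show I * t₂ / 2 + I * ((π - (t₁ + t₂) : ℝ) : ℂ) / 2 = π / 2 * I + -I * t₁ / 2 by
        push_cast; ring, exp_add, exp_pi_div_two_mul_I]
  rw [KWop_div_weight Γ x φ h₁ hx₁, KWop_div_weight Γ x φ h₂ hx₂, hz₁, hz₂, mul_sub, mul_sub,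
    mul_sum, mul_sum]
  simp only [mul_ite, mul_zero] at hsum ⊢
  linear_combination -hsum - φ (rev e₂) * hphase₁ + φ (rev e₁) * hphase₂

def kwPhase (Γ : Isoradial) (φ : ℂ × ℂ → ℂ) (e : ℂ × ℂ) : ℂ :=
  exp (I * Γ.θ (ue e) / 2) * (KWop Γ (critX Γ) φ e / critX Γ (ue e))

section CriticalWeights

variable {Γ : Isoradial} {e : ℂ × ℂ}

lemma kwPhase_eq_zero_iff (φ : ℂ × ℂ → ℂ) (he : e ∈ Γ.D) :
    kwPhase Γ φ e = 0 ↔ KWop Γ (critX Γ) φ e = 0 := by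
  simp [kwPhase, exp_ne_zero, (Γ.critX_pos he).ne']

lemma Sproj_div_critX (f : Sym2 ℂ → ℂ) (he : e ∈ Γ.D) :
    Sproj Γ f e / critX Γ (ue e) = Real.cos (Γ.θ (ue e) / 2) * projL (dirL e) (f (ue e)) := by
  have hsin : (Real.sin (Γ.θ (ue e) / 2) : ℂ) ≠ 0 := ofReal_ne_zero.mpr (Γ.sin_half_θ_pos he).ne'
  have hcos : (Real.cos (Γ.θ (ue e) / 2) : ℂ) ≠ 0 := ofReal_ne_zero.mpr
    (Real.cos_pos_of_mem_Ioo ⟨by linarith [Γ.θpos e he, Real.pi_pos], by linarith [Γ.θlt e he]⟩).ne'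
  rw [Sproj, critX, Real.tan_eq_sin_div_cos, ofReal_div]
  field_simp

lemma Sproj_rev (f : Sym2 ℂ → ℂ) (e : ℂ × ℂ) :
    Sproj Γ f (rev e) = Real.sin (Γ.θ (ue e) / 2) * projL (dirL (rev e)) (f (ue e)) := by
  rw [Sproj, ue_rev]

theorem kwPhase_Sproj_consec (f : Sym2 ℂ → ℂ) {z : ℂ} {e₁ e₂ : ℂ × ℂ}
    (h : ConsecIn Γ.D z e₁ e₂) :
    exp (-I * Γ.θ (ue e₁)) * kwPhase Γ (Sproj Γ f) e₁ - kwPhase Γ (Sproj Γ f) e₂ =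
      projL (faceDir Γ e₁) (f (ue e₁)) - projL (faceDir Γ e₁) (f (ue e₂)) := by
  have hnd₁ := Γ.nd e₁ h.1
  have hnd₂ := Γ.nd e₂ h.2.1
  set t₁ := Γ.θ (ue e₁)
  set t₂ := Γ.θ (ue e₂)
  have key := KWop_consec Γ (critX Γ) (Sproj Γ f) h (Γ.critX_pos h.1).ne' (Γ.critX_pos h.2.1).ne'
  rw [Sproj_div_critX f h.1, Sproj_div_critX f h.2.1, Sproj_rev, Sproj_rev] at key
  have hface : faceDir Γ e₁ ^ 2 = exp (-I * ((-t₂ : ℝ) : ℂ)) * dirL e₂ ^ 2 := by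
    rw [faceDir_sq, dirL_sq_eq_exp_ang_mul hnd₁ hnd₂, Γ.consecAngle z e₁ e₂ h, ← mul_assoc,
      ← exp_add]
    congr 2
    push_cast
    ring
  have rot₁ := cos_mul_projL_add_I_sin_mul_projL t₁ (normSq_dirL e₁) (normSq_dirL (rev e₁))
    (normSq_faceDir Γ e₁) (dirL_rev_sq hnd₁) (faceDir_sq Γ e₁) (f (ue e₁))
  have rot₂ := cos_mul_projL_add_I_sin_mul_projL (-t₂) (normSq_dirL e₂) (normSq_dirL (rev e₂))
    (normSq_faceDir Γ e₁) (dirL_rev_sq hnd₂) hface (f (ue e₂))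
  simp only [neg_div, Real.cos_neg, Real.sin_neg, ofReal_neg] at rot₂
  have hA : exp (-I * t₁ / 2) * exp (I * t₁ / 2) = 1 := by rw [← exp_add]; ring_nf; exact exp_zero
  have hB : exp (I * t₂ / 2) * exp (I * -(t₂ : ℂ) / 2) = 1 := by
    rw [← exp_add]; ring_nf; exact exp_zero
  have hC : exp (-I * t₁) * exp (I * t₁ / 2) = exp (-I * t₁ / 2) := by rw [← exp_add]; ring_nf
  rw [kwPhase, kwPhase]
  linear_combination (KWop Γ (critX Γ) (Sproj Γ f) e₁ / critX Γ (ue e₁)) * hC + key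
    + exp (-I * t₁ / 2) * rot₁ + projL (faceDir Γ e₁) (f (ue e₁)) * hA
    - exp (I * t₂ / 2) * rot₂ - projL (faceDir Γ e₁) (f (ue e₂)) * hB

end CriticalWeights

/-- on an isoradial graph with critical weights, `f` is s-holomorphic at a
vertex `z` (all of whose incident edges belong to the graph, i.e. an interior vertex) if
and only if `T(Sf)(e) = 0` for every directed edge `e` pointing at `z`. -/
theorem sHolomorphic_iff_KW_of_Sproj_eq_zero
    (Γ : Isoradial) (f : Sym2 ℂ → ℂ) (z : ℂ) :
    SHolAt Γ f z ↔ ∀ e ∈ Γ.D, e.2 = z → KWop Γ (critX Γ) (Sproj Γ f) e = 0 := by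
  constructor
  · intro hhol e he hez
    have hin : e ∈ Γ.inEdges z := Isoradial.mem_inEdges.mpr ⟨he, hez⟩
    choose! σ hσ using fun g (hg : g ∈ Γ.inEdges z) => Isoradial.exists_consecIn hg
    have hmaps : Set.MapsTo σ (Γ.inEdges z) (Γ.inEdges z) := fun g hg =>
      Isoradial.mem_inEdges.mpr ⟨(hσ g hg).2.1, (hσ g hg).2.2.2.1⟩
    have hpos : ∀ g ∈ Γ.inEdges z, 0 < Γ.θ (ue g) := fun g hg =>
      Γ.θpos g (Isoradial.mem_inEdges.mp hg).1
    have hsum : ∑ g ∈ Γ.inEdges z, Γ.θ (ue g) < 2 * π := by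
      rw [Isoradial.sum_inEdges_θ hin]
      linarith [Real.pi_pos]
    have hcocycle : ∀ g ∈ Γ.inEdges z, kwPhase Γ (Sproj Γ f) (σ g) =
        exp (-I * Γ.θ (ue g)) * kwPhase Γ (Sproj Γ f) g := fun g hg => by
      have hpair := kwPhase_Sproj_consec f (hσ g hg)
      rw [hhol g (σ g) (hσ g hg), sub_self, sub_eq_zero] at hpair
      exact hpair.symm
    exact (kwPhase_eq_zero_iff _ he).mp
      (eq_zero_of_map_eq_exp_mul hmaps hpos hsum hcocycle hin)
  · intro hT e₁ e₂ h
    have hpair := kwPhase_Sproj_consec f h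
    rw [(kwPhase_eq_zero_iff _ h.1).mpr (hT e₁ h.1 h.2.2.1),
      (kwPhase_eq_zero_iff _ h.2.1).mpr (hT e₂ h.2.1 h.2.2.2.1), mul_zero, sub_zero] at hpair
    exact sub_eq_zero.mp hpair.symm
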